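/- Global minimizer via the positive dual root: if σ₁ > 0 satisfies the dual algebraic equation (α⁻¹σ₁ + λ)σ₁² = ½‖f‖², then x₁ = σ₁⁻¹ f is the unique global minimizer of Π over ℝⁿ, and Π(x₁) = Π^d(σ₁) = max_{σ > 0} Π^d(σ). -/

import Mathlib

/-!
Write `Π(x) = W(½‖x‖²) − ⟨x, f⟩` with the convex `W(ξ) = ½α(ξ − λ)²`. For every `σ > 0`, the
Fenchel–Young inequality `W(ξ) ≥ σξ − (½α⁻¹σ² + λσ)` and completing the square in
`½σ‖x‖² − ⟨x, f⟩` give the weak duality with explicit gap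
`Π(x) ≥ Π^d(σ) + ½σ‖x − σ⁻¹f‖²`.
The dual algebraic equation says exactly that `½‖σ₁⁻¹f‖² = λ + α⁻¹σ₁`, i.e. that Fenchel–Young is
an equality at `x₁ = σ₁⁻¹f`, so `Π(x₁) = Π^d(σ₁)`. The gap at `σ₁` then gives strict minimality
of `x₁`, and the gap at `x₁` gives `Π^d(σ) ≤ Π(x₁) = Π^d(σ₁)`.
-/

namespace DoubleWell

variable {E : Type*} [NormedAddCommGroup E] [InnerProductSpace ℝ E]

noncomputable def energy (α lam : ℝ) (f x : E) : ℝ :=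
  (1/2) * α * ((1/2) * ‖x‖ ^ 2 - lam) ^ 2 - inner ℝ x f

noncomputable def dualEnergy (α lam : ℝ) (f : E) (σ : ℝ) : ℝ :=
  -(‖f‖ ^ 2 / (2 * σ)) - (1/2) * α⁻¹ * σ ^ 2 - lam * σ

theorem fenchel_young_quadratic {α : ℝ} (hα : 0 < α) (lam σ ξ : ℝ) :
    σ * ξ - ((1/2) * α⁻¹ * σ ^ 2 + lam * σ) ≤ (1/2) * α * (ξ - lam) ^ 2 := by
  have key : (1/2) * α * (ξ - lam) ^ 2 - (σ * ξ - ((1/2) * α⁻¹ * σ ^ 2 + lam * σ))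
      = (1/2) * α⁻¹ * (α * (ξ - lam) - σ) ^ 2 := by
    field_simp
    ring
  have : 0 ≤ (1/2) * α⁻¹ * (α * (ξ - lam) - σ) ^ 2 := by positivity
  linarith

theorem half_mul_norm_sq_sub_inner {σ : ℝ} (hσ : σ ≠ 0) (f x : E) :
    σ / 2 * ‖x‖ ^ 2 - inner ℝ x f = σ / 2 * ‖x - σ⁻¹ • f‖ ^ 2 - ‖f‖ ^ 2 / (2 * σ) := by
  rw [norm_sub_sq_real, inner_smul_right, norm_smul, Real.norm_eq_abs, mul_pow, sq_abs]
  field_simp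
  ring

theorem dualEnergy_add_le_energy {α : ℝ} (hα : 0 < α) (lam : ℝ) {σ : ℝ} (hσ : σ ≠ 0)
    (f x : E) :
    dualEnergy α lam f σ + σ / 2 * ‖x - σ⁻¹ • f‖ ^ 2 ≤ energy α lam f x := by
  have young := fenchel_young_quadratic hα lam σ ((1/2) * ‖x‖ ^ 2)
  have square := half_mul_norm_sq_sub_inner hσ f x
  unfold dualEnergy energy
  linarith

theorem energy_inv_smul_eq_dualEnergy (α lam : ℝ) {σ : ℝ} (hσ : σ ≠ 0) (f : E)
    (hdual : (α⁻¹ * σ + lam) * σ ^ 2 = (1/2) * ‖f‖ ^ 2) :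
    energy α lam f (σ⁻¹ • f) = dualEnergy α lam f σ := by
  have hf : ‖f‖ ^ 2 = 2 * (α⁻¹ * σ + lam) * σ ^ 2 := by linarith
  have hnorm : (1/2) * ‖σ⁻¹ • f‖ ^ 2 - lam = α⁻¹ * σ := by
    rw [norm_smul, Real.norm_eq_abs, mul_pow, sq_abs, hf]
    field_simp
    ring
  have hinner : inner ℝ (σ⁻¹ • f) f = 2 * (α⁻¹ * σ + lam) * σ := by
    rw [real_inner_smul_left, real_inner_self_eq_norm_sq, hf]
    field_simp
  unfold energy dualEnergy
  rw [hnorm, hinner, hf]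
  field_simp
  ring

end DoubleWell

open DoubleWell in
theorem double_well_global_minimizer_general
    (n : ℕ) (α lam : ℝ) (hα : 0 < α)
    (f : EuclideanSpace ℝ (Fin n)) (σ₁ : ℝ) (hσ₁ : 0 < σ₁)
    (hdual : (α⁻¹ * σ₁ + lam) * σ₁ ^ 2 = (1/2) * ‖f‖ ^ 2) :
    (∀ x : EuclideanSpace ℝ (Fin n), x ≠ σ₁⁻¹ • f →
      (1/2) * α * ((1/2) * ‖σ₁⁻¹ • f‖ ^ 2 - lam) ^ 2 - (inner ℝ (σ₁⁻¹ • f) f : ℝ)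
        < (1/2) * α * ((1/2) * ‖x‖ ^ 2 - lam) ^ 2 - (inner ℝ x f : ℝ))
    ∧ (1/2) * α * ((1/2) * ‖σ₁⁻¹ • f‖ ^ 2 - lam) ^ 2 - (inner ℝ (σ₁⁻¹ • f) f : ℝ)
        = -(‖f‖ ^ 2 / (2 * σ₁)) - (1/2) * α⁻¹ * σ₁ ^ 2 - lam * σ₁
    ∧ ∀ σ : ℝ, 0 < σ →
        -(‖f‖ ^ 2 / (2 * σ)) - (1/2) * α⁻¹ * σ ^ 2 - lam * σ
          ≤ -(‖f‖ ^ 2 / (2 * σ₁)) - (1/2) * α⁻¹ * σ₁ ^ 2 - lam * σ₁ := by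
  have strong := energy_inv_smul_eq_dualEnergy α lam hσ₁.ne' f hdual
  refine ⟨fun x hx => ?_, strong, fun σ hσ => ?_⟩
  · have gap : 0 < σ₁ / 2 * ‖x - σ₁⁻¹ • f‖ ^ 2 := by
      have : 0 < ‖x - σ₁⁻¹ • f‖ := norm_pos_iff.mpr (sub_ne_zero.mpr hx)
      positivity
    calc energy α lam f (σ₁⁻¹ • f) = dualEnergy α lam f σ₁ := strong
      _ < dualEnergy α lam f σ₁ + σ₁ / 2 * ‖x - σ₁⁻¹ • f‖ ^ 2 := lt_add_of_pos_right _ gap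
      _ ≤ energy α lam f x := dualEnergy_add_le_energy hα lam hσ₁.ne' f x
  · calc dualEnergy α lam f σ
        ≤ dualEnergy α lam f σ + σ / 2 * ‖σ₁⁻¹ • f - σ⁻¹ • f‖ ^ 2 :=
          le_add_of_nonneg_right (by positivity)
      _ ≤ energy α lam f (σ₁⁻¹ • f) := dualEnergy_add_le_energy hα lam hσ.ne' f _
      _ = dualEnergy α lam f σ₁ := strong

/-- **Global minimizer via the positive dual root**: if `σ₁ > 0` satisfies the
dual algebraic equation `(α⁻¹σ₁ + λ)σ₁² = ½‖f‖²`, then `x₁ = σ₁⁻¹ f` is the unique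
global minimizer of `Π(x) = ½α(½‖x‖² − λ)² − ⟨x,f⟩` over `ℝⁿ`, and
`Π(x₁) = Π^d(σ₁) = max_{σ>0} Π^d(σ)` where `Π^d(σ) = −‖f‖²/(2σ) − ½α⁻¹σ² − λσ`. -/
theorem double_well_global_minimizer
    (n : ℕ) (hn : 1 ≤ n) (α lam : ℝ) (hα : 0 < α) (hlam : 0 < lam)
    (f : EuclideanSpace ℝ (Fin n)) (σ₁ : ℝ) (hσ₁ : 0 < σ₁)
    (hdual : (α⁻¹ * σ₁ + lam) * σ₁ ^ 2 = (1/2) * ‖f‖ ^ 2) :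
    (∀ x : EuclideanSpace ℝ (Fin n), x ≠ σ₁⁻¹ • f →
      (1/2) * α * ((1/2) * ‖σ₁⁻¹ • f‖ ^ 2 - lam) ^ 2 - (inner ℝ (σ₁⁻¹ • f) f : ℝ)
        < (1/2) * α * ((1/2) * ‖x‖ ^ 2 - lam) ^ 2 - (inner ℝ x f : ℝ))
    ∧ (1/2) * α * ((1/2) * ‖σ₁⁻¹ • f‖ ^ 2 - lam) ^ 2 - (inner ℝ (σ₁⁻¹ • f) f : ℝ)
        = -(‖f‖ ^ 2 / (2 * σ₁)) - (1/2) * α⁻¹ * σ₁ ^ 2 - lam * σ₁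
    ∧ ∀ σ : ℝ, 0 < σ →
        -(‖f‖ ^ 2 / (2 * σ)) - (1/2) * α⁻¹ * σ ^ 2 - lam * σ
          ≤ -(‖f‖ ^ 2 / (2 * σ₁)) - (1/2) * α⁻¹ * σ₁ ^ 2 - lam * σ₁ :=
  double_well_global_minimizer_general n α lam hα f σ₁ hσ₁ hdual
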